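/- arXiv:1412.0196 — 8 statements merged into one kernel-verified Lean document; each statement's English description precedes it below -/
import Mathlib

section
/- Every d-minimal triangle (a triangle with vertices in the lattice (1/d)Z × (1/d)Z whose intersection with that lattice consists precisely of its three vertices) has area 1/(2d²). -/
noncomputable section

/-- The lattice `(1/d)ℤ × (1/d)ℤ` inside `ℝ × ℝ`. -/
def Ld (d : ℕ) : Set (ℝ × ℝ) :=
  {p | ∃ a b : ℤ, p = ((a : ℝ) / d, (b : ℝ) / d)}

/-- A `d`-minimal triangle: vertices in `L_d`, not collinear, and the closed triangle
meets `L_d` exactly in its three vertices. -/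
def IsMinimalTriangle (d : ℕ) (p q r : ℝ × ℝ) : Prop :=
  p ∈ Ld d ∧ q ∈ Ld d ∧ r ∈ Ld d ∧
    ¬ Collinear ℝ ({p, q, r} : Set (ℝ × ℝ)) ∧
    convexHull ℝ ({p, q, r} : Set (ℝ × ℝ)) ∩ Ld d = {p, q, r}

/-- An element of `G = GL₂(ℤ) ⋉ ℤ²`: an integer matrix `[[a,b],[c,e]]` of determinant
`±1` together with an integer translation vector `(v1, v2)`. -/
structure GMap where
  a : ℤ
  b : ℤ
  c : ℤ
  e : ℤ
  v1 : ℤ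
  v2 : ℤ
  unimod : a * e - b * c = 1 ∨ a * e - b * c = -1

/-- The affine action `x ↦ Ux + v` of a `GMap` on `ℝ²`. -/
def GMap.app (g : GMap) (p : ℝ × ℝ) : ℝ × ℝ :=
  ((g.a : ℝ) * p.1 + (g.b : ℝ) * p.2 + (g.v1 : ℝ),
   (g.c : ℝ) * p.1 + (g.e : ℝ) * p.2 + (g.v2 : ℝ))

/-- A `d`-minimal segment: endpoints in `L_d`, distinct, and the closed segment meets
`L_d` exactly in its two endpoints. -/
def IsMinimalSegment (d : ℕ) (p q : ℝ × ℝ) : Prop :=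
  p ∈ Ld d ∧ q ∈ Ld d ∧ p ≠ q ∧ segment ℝ p q ∩ Ld d = {p, q}

/-- The point of `L_d` with integer numerator data `p : ℤ × ℤ`. -/
def pt (d : ℕ) (p : ℤ × ℤ) : ℝ × ℝ := ((p.1 : ℝ) / d, (p.2 : ℝ) / d)

/-- Counterclockwise orientation of the ordered triple of numerator data. -/
def ccwZ (p q r : ℤ × ℤ) : Prop :=
  0 < (q.1 - p.1) * (r.2 - p.2) - (q.2 - p.2) * (r.1 - p.1)

/-- Weight (mod `d`) of the oriented minimal segment from `(w/d, x/d)` to `(y/d, z/d)`,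
given by numerator data `(w,x)` and `(y,z)`. -/
def segWeight (d : ℕ) (p q : ℤ × ℤ) : ZMod d :=
  ((p.1 * q.2 - p.2 * q.1 : ℤ) : ZMod d)

/-- The multiset of weights of the three edges `p→q`, `q→r`, `r→p` of a triangle
given by numerator data. -/
def triWeight (d : ℕ) (p q r : ℤ × ℤ) : Multiset (ZMod d) :=
  {segWeight d p q, segWeight d q r, segWeight d r p}

/-! The affine map `(s, t) ↦ p + s • (q - p) + t • (r - p)` carries the unit right triangle onto
the triangle `pqr`, so its area is `|det (q - p, r - p)| / 2`. If the triangle meets `L_d` only in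
its vertices, the edge vectors `q - p`, `r - p` generate `L_d`: a lattice point
`a • (q - p) + b • (r - p)` with `a` or `b` non-integral, reduced mod `1`, would give a lattice point
of the triangle or of its reflection through the midpoint of `qr` other than a vertex. A basis of
`L_d` has determinant `±1 / d²`. -/

open MeasureTheory Set Pointwise

def stdTriangle : Set (ℝ × ℝ) := {x | 0 ≤ x.1 ∧ 0 ≤ x.2 ∧ x.1 + x.2 ≤ 1}

theorem convexHull_vertices_stdTriangle :
    convexHull ℝ {0, (1, 0), (0, 1)} = stdTriangle := by
  refine (convexHull_min ?_ ?_).antisymm fun x ⟨h₁, h₂, h₁₂⟩ ↦ ?_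
  · rintro x (rfl | rfl | rfl) <;> norm_num [stdTriangle]
  · rintro x ⟨hx₁, hx₂, hx⟩ y ⟨hy₁, hy₂, hy⟩ a b ha hb hab
    simp only [stdTriangle, mem_ofPred_eq, Prod.fst_add, Prod.snd_add, Prod.smul_fst,
      Prod.smul_snd, smul_eq_mul]
    exact ⟨by positivity, by positivity, by nlinarith⟩
  · have := (convex_convexHull ℝ ({0, (1, 0), (0, 1)} : Set (ℝ × ℝ))).sum_mem
      (t := Finset.univ) (w := ![1 - x.1 - x.2, x.1, x.2]) (z := ![0, (1, 0), (0, 1)])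
      (fun i _ ↦ by fin_cases i <;> simp <;> linarith) (by simp [Fin.sum_univ_three]; ring)
      (fun i _ ↦ subset_convexHull ℝ _ (by fin_cases i <;> simp))
    simpa [Fin.sum_univ_three] using this

theorem volume_stdTriangle : volume stdTriangle = ENNReal.ofReal (1 / 2) := by
  have hmeas : MeasurableSet stdTriangle :=
    (measurableSet_le measurable_const measurable_fst).inter
      ((measurableSet_le measurable_const measurable_snd).inter
        (measurableSet_le (measurable_fst.add measurable_snd) measurable_const))
  have hslice (x : ℝ) : volume (Prod.mk x ⁻¹' stdTriangle)
      = (Icc 0 1).indicator (fun x ↦ ENNReal.ofReal (1 - x)) x := by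
    by_cases hx : 0 ≤ x
    · have : Prod.mk x ⁻¹' stdTriangle = Icc 0 (1 - x) := by
        ext y
        simp only [stdTriangle, mem_preimage, mem_ofPred_eq, mem_Icc, hx, true_and]
        constructor <;> rintro ⟨h₁, h₂⟩ <;> exact ⟨h₁, by linarith⟩
      rw [this, Real.volume_Icc, sub_zero]
      by_cases hx₁ : x ≤ 1
      · rw [indicator_of_mem (show x ∈ Icc (0 : ℝ) 1 from ⟨hx, hx₁⟩)]
      · rw [indicator_of_notMem (fun h ↦ hx₁ h.2), ENNReal.ofReal_eq_zero]
        linarith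
    · have : Prod.mk x ⁻¹' stdTriangle = ∅ := by
        ext y
        simp [stdTriangle, hx]
      rw [this, measure_empty, indicator_of_notMem (fun h ↦ hx h.1)]
  rw [Measure.volume_eq_prod, Measure.prod_apply hmeas]
  simp_rw [hslice]
  rw [lintegral_indicator measurableSet_Icc, ← ofReal_integral_eq_lintegral_ofReal,
    integral_Icc_eq_integral_Ioc, ← intervalIntegral.integral_of_le zero_le_one,
    intervalIntegral.integral_sub intervalIntegrable_const intervalIntegral.intervalIntegrable_id]
  · norm_num
  · exact (continuous_const.sub continuous_id).integrableOn_Icc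
  · exact (ae_restrict_iff' measurableSet_Icc).2 (.of_forall fun x hx ↦ by simp [hx.2])

section VectorSpace

variable {E : Type*} [AddCommGroup E] [Module ℝ E]

theorem convexHull_triple_eq_vadd_image (p q r : E) :
    convexHull ℝ {p, q, r} = p +ᵥ
      (LinearMap.toSpanSingleton ℝ E (q - p)).coprod (.toSpanSingleton ℝ E (r - p)) ''
        stdTriangle := by
  rw [← convexHull_vertices_stdTriangle, LinearMap.image_convexHull, ← convexHull_vadd]
  congr 1
  simp [image_insert_eq, vadd_set_insert]

theorem add_smul_add_smul_mem_convexHull_triple {p q r : E} {s t : ℝ} (hs : 0 ≤ s) (ht : 0 ≤ t)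
    (hst : s + t ≤ 1) : p + s • (q - p) + t • (r - p) ∈ convexHull ℝ {p, q, r} := by
  rw [convexHull_triple_eq_vadd_image]
  exact ⟨_, ⟨(s, t), ⟨hs, ht, hst⟩, rfl⟩, by simp [add_assoc]⟩

theorem eq_vertex_coeffs_of_mem_triple {p q r : E} (hind : LinearIndependent ℝ ![q - p, r - p])
    {s t : ℝ} (h : p + s • (q - p) + t • (r - p) ∈ ({p, q, r} : Set E)) :
    (s = 0 ∧ t = 0) ∨ (s = 1 ∧ t = 0) ∨ (s = 0 ∧ t = 1) := by
  rw [LinearIndependent.pair_iff] at hind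
  simp only [mem_insert_iff, mem_singleton_iff] at h
  rcases h with h | h | h
  · exact .inl (hind s t (by linear_combination (norm := module) h))
  · obtain ⟨hs, ht⟩ := hind (s - 1) t (by linear_combination (norm := module) h)
    exact .inr (.inl ⟨by linarith, ht⟩)
  · obtain ⟨hs, ht⟩ := hind s (t - 1) (by linear_combination (norm := module) h)
    exact .inr (.inr ⟨hs, by linarith⟩)

theorem linearIndependent_sub_of_not_collinear {p q r : E}
    (h : ¬ Collinear ℝ ({p, q, r} : Set E)) : LinearIndependent ℝ ![q - p, r - p] := by
  rw [← affineIndependent_iff_not_collinear_set,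
    affineIndependent_iff_linearIndependent_vsub ℝ _ (0 : Fin 3),
    ← linearIndependent_equiv (finSuccAboveEquiv (0 : Fin 3))] at h
  convert h using 1
  · ext i
    fin_cases i <;> rfl
  · rfl

theorem exists_int_coeffs_of_convexHull_inter_subset {Λ : AddSubgroup E} {p q r : E}
    (hp : p ∈ Λ) (hq : q ∈ Λ) (hr : r ∈ Λ) (hind : LinearIndependent ℝ ![q - p, r - p])
    (hempty : convexHull ℝ {p, q, r} ∩ Λ ⊆ {p, q, r}) {a b : ℝ}
    (hab : a • (q - p) + b • (r - p) ∈ Λ) : ∃ m n : ℤ, a = m ∧ b = n := by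
  set s := Int.fract a
  set t := Int.fract b
  have hw : s • (q - p) + t • (r - p) ∈ Λ := by
    have : s • (q - p) + t • (r - p)
        = a • (q - p) + b • (r - p) - ⌊a⌋ • (q - p) - ⌊b⌋ • (r - p) := by
      simp only [s, t, ← Int.self_sub_floor, sub_smul, ← Int.cast_smul_eq_zsmul ℝ]
      abel
    rw [this]
    exact Λ.sub_mem (Λ.sub_mem hab (Λ.zsmul_mem (Λ.sub_mem hq hp) _))
      (Λ.zsmul_mem (Λ.sub_mem hr hp) _)
  have hs₀ := Int.fract_nonneg a
  have ht₀ := Int.fract_nonneg b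
  have hs₁ := Int.fract_lt_one a
  have ht₁ := Int.fract_lt_one b
  have hst₀ : s = 0 ∧ t = 0 := by
    by_cases hst : s + t ≤ 1
    · have hmem : p + s • (q - p) + t • (r - p) ∈ convexHull ℝ {p, q, r} ∩ Λ :=
        ⟨add_smul_add_smul_mem_convexHull_triple hs₀ ht₀ hst, by
          rw [add_assoc]; exact Λ.add_mem hp hw⟩
      rcases eq_vertex_coeffs_of_mem_triple hind (hempty hmem) with h | h | h
      · exact h
      · linarith [h.1]
      · linarith [h.2]
    · have hmem : p + (1 - s) • (q - p) + (1 - t) • (r - p) ∈ convexHull ℝ {p, q, r} ∩ Λ := by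
        refine ⟨add_smul_add_smul_mem_convexHull_triple (by linarith) (by linarith)
          (by linarith), ?_⟩
        have : p + (1 - s) • (q - p) + (1 - t) • (r - p)
            = q + r - (p + (s • (q - p) + t • (r - p))) := by
          module
        rw [this]
        exact Λ.sub_mem (Λ.add_mem hq hr) (Λ.add_mem hp hw)
      rcases eq_vertex_coeffs_of_mem_triple hind (hempty hmem) with h | h | h <;>
        linarith [h.1, h.2]
  exact ⟨⌊a⌋, ⌊b⌋, by linarith [Int.floor_add_fract a], by linarith [Int.floor_add_fract b]⟩

theorem exists_smul_add_smul_eq [FiniteDimensional ℝ E] (hE : Module.finrank ℝ E = 2) {u v : E}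
    (hind : LinearIndependent ℝ ![u, v]) (x : E) : ∃ a b : ℝ, a • u + b • v = x := by
  have hx : x ∈ Submodule.span ℝ (range ![u, v]) := by
    rw [hind.span_eq_top_of_card_eq_finrank' (by simp [hE])]
    trivial
  rwa [Matrix.range_cons_cons_empty, Submodule.mem_span_pair] at hx

end VectorSpace

def cross (u v : ℝ × ℝ) : ℝ := u.1 * v.2 - u.2 * v.1

theorem cross_smul_add_smul (u v : ℝ × ℝ) (a b a' b' : ℝ) :
    cross (a • u + b • v) (a' • u + b' • v) = (a * b' - b * a') * cross u v := by
  simp only [cross, Prod.fst_add, Prod.snd_add, Prod.smul_fst, Prod.smul_snd, smul_eq_mul]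
  ring

theorem det_coprod_toSpanSingleton (u v : ℝ × ℝ) :
    LinearMap.det ((LinearMap.toSpanSingleton ℝ _ u).coprod (.toSpanSingleton ℝ _ v))
      = cross u v := by
  have : (LinearMap.toSpanSingleton ℝ _ u).coprod (.toSpanSingleton ℝ _ v) =
      Matrix.toLin (Module.Basis.finTwoProd ℝ) (Module.Basis.finTwoProd ℝ)
        !![u.1, v.1; u.2, v.2] := by
    ext <;> simp [Matrix.toLin_finTwoProd_apply]
  rw [this, LinearMap.det_toLin, Matrix.det_fin_two_of, cross]
  ring

theorem volume_convexHull_triple (p q r : ℝ × ℝ) :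
    volume (convexHull ℝ {p, q, r}) = ENNReal.ofReal (|cross (q - p) (r - p)| / 2) := by
  rw [convexHull_triple_eq_vadd_image, measure_vadd, Measure.addHaar_image_linearMap,
    volume_stdTriangle, det_coprod_toSpanSingleton, ← ENNReal.ofReal_mul (abs_nonneg _)]
  ring_nf

@[simps]
def ptHom (d : ℕ) : ℤ × ℤ →+ ℝ × ℝ where
  toFun := pt d
  map_zero' := by simp [pt]
  map_add' x y := by simp [pt, add_div]

theorem mem_range_ptHom {d : ℕ} {x : ℝ × ℝ} : x ∈ (ptHom d).range ↔ x ∈ Ld d := by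
  simp [pt, Ld, eq_comm]

theorem abs_cross_sub_of_isMinimalTriangle {d : ℕ} {p q r : ℝ × ℝ}
    (h : IsMinimalTriangle d p q r) : |cross (q - p) (r - p)| = 1 / (d : ℝ) ^ 2 := by
  obtain ⟨hp, hq, hr, hcol, hcap⟩ := h
  have hind := linearIndependent_sub_of_not_collinear hcol
  have hint (x : ℝ × ℝ) (hx : x ∈ (ptHom d).range) :
      ∃ m n : ℤ, x = (m : ℝ) • (q - p) + (n : ℝ) • (r - p) := by
    obtain ⟨a, b, rfl⟩ := exists_smul_add_smul_eq (by simp) hind x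
    obtain ⟨m, n, rfl, rfl⟩ := exists_int_coeffs_of_convexHull_inter_subset
      (mem_range_ptHom.2 hp) (mem_range_ptHom.2 hq) (mem_range_ptHom.2 hr) hind
      (fun x hx ↦ hcap.subset ⟨hx.1, mem_range_ptHom.1 hx.2⟩) hx
    exact ⟨m, n, rfl⟩
  obtain ⟨m, n, hmn⟩ := hint (pt d (1, 0)) ⟨_, rfl⟩
  obtain ⟨m', n', hmn'⟩ := hint (pt d (0, 1)) ⟨_, rfl⟩
  obtain ⟨P, rfl⟩ := mem_range_ptHom.2 hp
  obtain ⟨Q, rfl⟩ := mem_range_ptHom.2 hq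
  obtain ⟨R, rfl⟩ := mem_range_ptHom.2 hr
  -- `L_0` is a single point, so it carries no triangle
  have hd : (d : ℝ) ≠ 0 := fun hd ↦ hind.ne_zero 0 (by simp [pt, hd])
  set D : ℤ := (Q.1 - P.1) * (R.2 - P.2) - (Q.2 - P.2) * (R.1 - P.1)
  have hD : cross (ptHom d Q - ptHom d P) (ptHom d R - ptHom d P) = D / (d : ℝ) ^ 2 := by
    simp only [cross, ptHom_apply, pt, Prod.fst_sub, Prod.snd_sub, D]
    push_cast
    field_simp
  have hunit : (m * n' - n * m') * D = 1 := by
    have := congrArg₂ cross hmn hmn'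
    rw [cross_smul_add_smul, hD] at this
    simp only [cross, pt] at this
    field_simp at this
    exact_mod_cast this.symm
  rw [hD, abs_div, ← Int.cast_abs, Int.isUnit_iff_abs_eq.1 (.of_mul_eq_one_right _ hunit)]
  simp

theorem minimal_triangle_area_general (d : ℕ) (p q r : ℝ × ℝ)
    (h : IsMinimalTriangle d p q r) :
    MeasureTheory.volume (convexHull ℝ ({p, q, r} : Set (ℝ × ℝ)))
      = ENNReal.ofReal (1 / (2 * (d : ℝ) ^ 2)) := by
  rw [volume_convexHull_triple, abs_cross_sub_of_isMinimalTriangle h]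
  ring_nf

/-- every `d`-minimal triangle has area `1/(2d²)`. -/
theorem minimal_triangle_area (d : ℕ) (hd : 0 < d) (p q r : ℝ × ℝ)
    (h : IsMinimalTriangle d p q r) :
    MeasureTheory.volume (convexHull ℝ ({p, q, r} : Set (ℝ × ℝ)))
      = ENNReal.ofReal (1 / (2 * (d : ℝ) ^ 2)) :=
  minimal_triangle_area_general d p q r h
end
end

section
/- Any d-minimal triangle T is G-equivalent to a translate of the standard triangle T₁ = Conv((0,0), (1/d,0), (0,1/d)) by a vector in the lattice (1/d)Z × (1/d)Z; moreover the translate may be chosen to lie in the unit square [0,1]². -/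
noncomputable section

/-- The standard `d`-minimal triangle `T₁ = Conv((0,0), (1/d,0), (0,1/d))`. -/
def T1 (d : ℕ) : Set (ℝ × ℝ) :=
  convexHull ℝ ({((0 : ℝ), (0 : ℝ)), ((1 : ℝ) / d, 0), (0, (1 : ℝ) / d)} : Set (ℝ × ℝ))

/-!
If the edge vectors `u = Q - P`, `w = R - P` of a minimal triangle did not form a basis of `ℤ²`,
some integer point would lie outside the sublattice they span; reducing it modulo that sublattice
(and reflecting through `(u + w) / 2` if necessary) puts a representative in the triangle `0, u, w`,
which yields a lattice point of the triangle other than its vertices. Hence `det [u w] = ±1`, and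
the inverse matrix followed by a suitable integer translation sends the triangle to `t/d + T₁` with
`0 ≤ t < d` coordinatewise.
-/

open Submodule Pointwise

def det2 (u w : ℤ × ℤ) : ℤ := u.1 * w.2 - u.2 * w.1

lemma det2_add_left (x y w : ℤ × ℤ) : det2 (x + y) w = det2 x w + det2 y w := by
  simp only [det2, Prod.fst_add, Prod.snd_add]; ring

lemma det2_add_right (u x y : ℤ × ℤ) : det2 u (x + y) = det2 u x + det2 u y := by
  simp only [det2, Prod.fst_add, Prod.snd_add]; ring

@[simp]
lemma det2_self (u : ℤ × ℤ) : det2 u u = 0 := by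
  simp only [det2]; ring

lemma det2_smul_eq (u w z : ℤ × ℤ) : det2 u w • z = det2 z w • u + det2 u z • w := by
  ext <;> simp only [det2, Prod.smul_fst, Prod.smul_snd, Prod.fst_add, Prod.snd_add,
    smul_eq_mul] <;> ring

lemma det2_smul_add_smul (u w : ℤ × ℤ) (a b c e : ℤ) :
    det2 (a • u + b • w) (c • u + e • w) = (a * e - b * c) * det2 u w := by
  simp only [det2, Prod.smul_fst, Prod.smul_snd, Prod.fst_add, Prod.snd_add, smul_eq_mul]
  ring

lemma isUnit_det2_of_span_eq_top {u w : ℤ × ℤ} (h : span ℤ {u, w} = ⊤) :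
    IsUnit (det2 u w) := by
  obtain ⟨a, b, hab⟩ := mem_span_pair.1 (h ▸ mem_top : ((1 : ℤ), (0 : ℤ)) ∈ span ℤ {u, w})
  obtain ⟨c, e, hce⟩ := mem_span_pair.1 (h ▸ mem_top : ((0 : ℤ), (1 : ℤ)) ∈ span ℤ {u, w})
  have h1 := det2_smul_add_smul u w a b c e
  rw [hab, hce] at h1
  exact .of_mul_eq_one_right _ (by simpa [det2] using h1.symm)

section pt

variable {d : ℕ}

lemma Ld_eq_range : Ld d = Set.range (pt d) := by
  ext x
  simp [Ld, pt, eq_comm]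

@[simp]
lemma pt_zero : pt d 0 = 0 := by
  simp [pt]

lemma pt_add (x y : ℤ × ℤ) : pt d (x + y) = pt d x + pt d y := by
  simp [pt, add_div]

lemma pt_sub (x y : ℤ × ℤ) : pt d (x - y) = pt d x - pt d y := by
  simp [pt, sub_div]

lemma pt_zsmul (a : ℤ) (x : ℤ × ℤ) : pt d (a • x) = (a : ℝ) • pt d x := by
  simp [pt, mul_div_assoc]

lemma pt_injective (hd : d ≠ 0) : Function.Injective (pt d) := by
  intro x y h
  have hd' : (d : ℝ) ≠ 0 := by exact_mod_cast hd
  simpa [pt, div_left_inj' hd', Prod.ext_iff] using h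

end pt

lemma smul_add_smul_mem_convexHull_zero {𝕜 E : Type*} [Field 𝕜] [LinearOrder 𝕜]
    [IsStrictOrderedRing 𝕜] [AddCommGroup E] [Module 𝕜 E] {x y : E} {a b : 𝕜} (ha : 0 ≤ a)
    (hb : 0 ≤ b) (hab : a + b ≤ 1) : a • x + b • y ∈ convexHull 𝕜 ({0, x, y} : Set E) := by
  have h := (convex_convexHull 𝕜 ({0, x, y} : Set E)).sum_mem (t := Finset.univ)
    (w := ![1 - a - b, a, b]) (z := ![0, x, y])
    (by intro i _; fin_cases i <;> simp <;> linarith)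
    (by simp [Fin.sum_univ_three]; ring)
    (by intro i _; fin_cases i <;> apply subset_convexHull <;> simp)
  simpa [Fin.sum_univ_three] using h

lemma AffineIndependent.linearIndependent_sub {k V : Type*} [Ring k] [AddCommGroup V]
    [Module k V] {p q r : V} (h : AffineIndependent k ![p, q, r]) :
    LinearIndependent k ![q - p, r - p] := by
  rw [LinearIndependent.pair_iff]
  intro a b hab
  have h0 := h.eq_zero_of_sum_eq_zero (s := Finset.univ) (w := ![-(a + b), a, b])
    (by simp [Fin.sum_univ_three])
    (by rw [← hab]; simp [Fin.sum_univ_three, smul_sub, add_smul]; abel)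
  exact ⟨h0 1 (by simp), h0 2 (by simp)⟩

lemma LinearIndependent.fst_mul_snd_sub_ne_zero {K : Type*} [CommRing K] [Nontrivial K]
    {x y : K × K} (h : LinearIndependent K ![x, y]) : x.1 * y.2 - x.2 * y.1 ≠ 0 := by
  rw [LinearIndependent.pair_iff] at h
  intro h0
  obtain ⟨-, hx2⟩ := h y.2 (-x.2) (Prod.ext (by simp; linear_combination h0) (by simp; ring))
  obtain ⟨-, hx1⟩ := h y.1 (-x.1) (Prod.ext (by simp; ring) (by simp; linear_combination -h0))
  have hx : x = 0 := Prod.ext (neg_eq_zero.1 hx1) (neg_eq_zero.1 hx2)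
  exact one_ne_zero (h 1 0 (by simp [hx])).1

lemma det2_ne_zero_of_not_collinear {d : ℕ} {P Q R : ℤ × ℤ}
    (h : ¬ Collinear ℝ ({pt d P, pt d Q, pt d R} : Set (ℝ × ℝ))) :
    det2 (Q - P) (R - P) ≠ 0 := by
  intro h0
  rw [← affineIndependent_iff_not_collinear_set] at h
  apply h.linearIndependent_sub.fst_mul_snd_sub_ne_zero
  have h0' : ((det2 (Q - P) (R - P) : ℤ) : ℝ) / (d * d) = 0 := by simp [h0]
  convert h0' using 1
  simp [pt, det2]
  ring

/- Reduce `z` modulo `span ℤ {u, w}` into the half-open parallelogram spanned by `u` and `w`; it is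
the union of the triangle `0, u, w` and the reflection of that triangle through `(u + w) / 2`. -/
lemma exists_notMem_span_pt_mem_convexHull (d : ℕ) {u w z : ℤ × ℤ} (hD : det2 u w ≠ 0)
    (hz : z ∉ span ℤ {u, w}) :
    ∃ c ∉ span ℤ {u, w}, pt d c ∈ convexHull ℝ ({0, pt d u, pt d w} : Set (ℝ × ℝ)) := by
  have hu : u ∈ span ℤ {u, w} := subset_span (Set.mem_insert u _)
  have hw : w ∈ span ℤ {u, w} := subset_span (Set.mem_insert_of_mem u rfl)
  set α : ℝ := det2 z w / det2 u w
  set β : ℝ := det2 u z / det2 u w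
  have hz_eq : pt d z = α • pt d u + β • pt d w := by
    have hD' : (det2 u w : ℝ) ≠ 0 := by exact_mod_cast hD
    have := congrArg (pt d) (det2_smul_eq u w z)
    rw [pt_add, pt_zsmul, pt_zsmul, pt_zsmul] at this
    rw [← smul_right_inj hD', smul_add, this, smul_smul, smul_smul, mul_div_cancel₀ _ hD',
      mul_div_cancel₀ _ hD']
  set z' := z - ⌊α⌋ • u - ⌊β⌋ • w
  have hz' : z' ∉ span ℤ {u, w} := fun h => hz <| by
    rw [show z = z' + ⌊α⌋ • u + ⌊β⌋ • w by simp only [z']; abel]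
    exact add_mem (add_mem h (smul_mem _ ⌊α⌋ hu)) (smul_mem _ ⌊β⌋ hw)
  have hz'_eq : pt d z' = Int.fract α • pt d u + Int.fract β • pt d w := by
    simp only [z', pt_sub, pt_zsmul, hz_eq, Int.fract, sub_smul]
    abel
  by_cases hfract : Int.fract α + Int.fract β ≤ 1
  · exact ⟨z', hz', hz'_eq ▸ smul_add_smul_mem_convexHull_zero (Int.fract_nonneg _)
      (Int.fract_nonneg _) hfract⟩
  · refine ⟨u + w - z', fun h => hz' ?_, ?_⟩
    · simpa using sub_mem (add_mem hu hw) h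
    · have h1 := Int.fract_lt_one α
      have h2 := Int.fract_lt_one β
      have hc_eq : pt d (u + w - z') =
          (1 - Int.fract α) • pt d u + (1 - Int.fract β) • pt d w := by
        rw [pt_sub, pt_add, hz'_eq]
        simp only [sub_smul, one_smul]
        abel
      rw [hc_eq]
      exact smul_add_smul_mem_convexHull_zero (by linarith) (by linarith) (by linarith)

lemma isUnit_det2_of_forall_mem_span (d : ℕ) {u w : ℤ × ℤ} (hD : det2 u w ≠ 0)
    (h : ∀ c, pt d c ∈ convexHull ℝ ({0, pt d u, pt d w} : Set (ℝ × ℝ)) → c ∈ span ℤ {u, w}) :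
    IsUnit (det2 u w) := by
  by_contra hu
  obtain ⟨z, hz⟩ : ∃ z, z ∉ span ℤ {u, w} := by
    by_contra! hall
    exact hu (isUnit_det2_of_span_eq_top (eq_top_iff.2 fun z _ => hall z))
  obtain ⟨c, hc, hmem⟩ := exists_notMem_span_pt_mem_convexHull d hD hz
  exact hc (h c hmem)

lemma IsMinimalTriangle.isUnit_det2 {d : ℕ} (hd : d ≠ 0) {P Q R : ℤ × ℤ}
    (h : IsMinimalTriangle d (pt d P) (pt d Q) (pt d R)) : IsUnit (det2 (Q - P) (R - P)) := by
  obtain ⟨-, -, -, hcol, hmin⟩ := h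
  refine isUnit_det2_of_forall_mem_span d (det2_ne_zero_of_not_collinear hcol) fun c hc => ?_
  have hhull : pt d (P + c) ∈ convexHull ℝ ({pt d P, pt d Q, pt d R} : Set (ℝ × ℝ)) := by
    have := Set.vadd_mem_vadd_set (a := pt d P) hc
    simpa [← convexHull_vadd, Set.vadd_set_insert, pt_sub, pt_add] using this
  have hvert : pt d (P + c) ∈ ({pt d P, pt d Q, pt d R} : Set (ℝ × ℝ)) :=
    hmin ▸ ⟨hhull, Ld_eq_range ▸ Set.mem_range_self _⟩
  simp only [Set.mem_insert_iff, Set.mem_singleton_iff, (pt_injective hd).eq_iff] at hvert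
  rcases hvert with hc | hc | hc
  · simp [show c = 0 by simpa using hc]
  · exact subset_span (eq_sub_of_add_eq' hc ▸ Set.mem_insert _ _)
  · exact subset_span (eq_sub_of_add_eq' hc ▸ Set.mem_insert_of_mem _ rfl)

namespace GMap

def toAffineMap (g : GMap) : (ℝ × ℝ) →ᵃ[ℝ] ℝ × ℝ where
  toFun := g.app
  linear := ((g.a : ℝ) • LinearMap.fst ℝ ℝ ℝ + (g.b : ℝ) • LinearMap.snd ℝ ℝ ℝ).prod
    ((g.c : ℝ) • LinearMap.fst ℝ ℝ ℝ + (g.e : ℝ) • LinearMap.snd ℝ ℝ ℝ)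
  map_vadd' p v := by
    ext <;> simp [GMap.app] <;> ring

lemma image_convexHull (g : GMap) (s : Set (ℝ × ℝ)) :
    g.app '' convexHull ℝ s = convexHull ℝ (g.app '' s) :=
  g.toAffineMap.image_convexHull s

/-- `x ↦ U x + k`, where `U = det2 u w • adj [u w]` is the inverse of the matrix with columns
`u`, `w` because `det2 u w = ±1`. -/
def ofBasis (u w k : ℤ × ℤ) (h : IsUnit (det2 u w)) : GMap where
  a := det2 u w * w.2
  b := -(det2 u w * w.1)
  c := -(det2 u w * u.2)
  e := det2 u w * u.1
  v1 := k.1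
  v2 := k.2
  unimod := by
    rw [← Int.isUnit_iff]
    convert h using 1
    rw [show det2 u w * w.2 * (det2 u w * u.1) - -(det2 u w * w.1) * -(det2 u w * u.2) =
      det2 u w ^ 2 * det2 u w by unfold det2; ring, Int.isUnit_sq h, one_mul]

lemma ofBasis_app_pt {d : ℕ} (hd : d ≠ 0) {u w : ℤ × ℤ} (k : ℤ × ℤ) (h : IsUnit (det2 u w))
    (x : ℤ × ℤ) :
    (ofBasis u w k h).app (pt d x) = pt d (det2 u w • (det2 x w, det2 u x) + (d : ℤ) • k) := by
  have hd' : (d : ℝ) ≠ 0 := by exact_mod_cast hd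
  ext <;> simp [ofBasis, app, pt, det2] <;> field_simp <;> ring

end GMap

lemma exists_gMap_app_eq {d : ℕ} (hd : d ≠ 0) (P : ℤ × ℤ) {u w : ℤ × ℤ}
    (h : IsUnit (det2 u w)) :
    ∃ (g : GMap) (t : ℤ × ℤ), t.1 ∈ Set.Ico 0 (d : ℤ) ∧ t.2 ∈ Set.Ico 0 (d : ℤ) ∧
      g.app (pt d P) = pt d t ∧ g.app (pt d (P + u)) = pt d (t + (1, 0)) ∧
      g.app (pt d (P + w)) = pt d (t + (0, 1)) := by
  have hD : det2 u w * det2 u w = 1 := by rw [← sq]; exact Int.isUnit_sq h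
  set y : ℤ × ℤ := det2 u w • (det2 P w, det2 u P)
  set k : ℤ × ℤ := (-(y.1 / d), -(y.2 / d))
  set t : ℤ × ℤ := (y.1 % d, y.2 % d)
  have ht : y + (d : ℤ) • k = t := by
    ext <;> simp [k, t, Int.emod_def] <;> ring
  have hd' : (0 : ℤ) < d := by omega
  refine ⟨.ofBasis u w k h, t, ⟨Int.emod_nonneg _ hd'.ne', Int.emod_lt_of_pos _ hd'⟩,
    ⟨Int.emod_nonneg _ hd'.ne', Int.emod_lt_of_pos _ hd'⟩, ?_, ?_, ?_⟩ <;>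
    rw [GMap.ofBasis_app_pt hd, ← ht]
  · rw [add_right_comm]; congr 2
    ext <;> simp [y, det2_add_left, det2_add_right, mul_add, hD]
  · rw [add_right_comm]; congr 2
    ext <;> simp [y, det2_add_left, det2_add_right, mul_add, hD]

lemma image_add_pt_T1 (d : ℕ) (t : ℤ × ℤ) :
    (fun x => x + pt d t) '' T1 d =
      convexHull ℝ ({pt d t, pt d (t + (1, 0)), pt d (t + (0, 1))} : Set (ℝ × ℝ)) := by
  have hT1 : T1 d = convexHull ℝ ({pt d 0, pt d (1, 0), pt d (0, 1)} : Set (ℝ × ℝ)) := by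
    simp [T1, pt]
  rw [hT1, show (fun x => x + pt d t) = (pt d t +ᵥ ·) from funext fun x => add_comm x _,
    Set.image_vadd, ← convexHull_vadd]
  simp [Set.vadd_set_insert, pt_add]

lemma pt_mem_Icc {d : ℕ} {x : ℤ × ℤ} (h1 : x.1 ∈ Set.Icc 0 (d : ℤ))
    (h2 : x.2 ∈ Set.Icc 0 (d : ℤ)) : pt d x ∈ Set.Icc ((0 : ℝ), (0 : ℝ)) (1, 1) := by
  have key : ∀ n ∈ Set.Icc 0 (d : ℤ), (n : ℝ) / d ∈ Set.Icc 0 1 := fun n ⟨h0, h1⟩ =>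
    ⟨div_nonneg (by exact_mod_cast h0) d.cast_nonneg,
      div_le_one_of_le₀ (by exact_mod_cast h1) d.cast_nonneg⟩
  exact ⟨⟨(key _ h1).1, (key _ h2).1⟩, ⟨(key _ h1).2, (key _ h2).2⟩⟩

lemma image_add_pt_T1_subset_Icc {d : ℕ} {t : ℤ × ℤ} (ht1 : t.1 ∈ Set.Ico 0 (d : ℤ))
    (ht2 : t.2 ∈ Set.Ico 0 (d : ℤ)) :
    (fun x => x + pt d t) '' T1 d ⊆ Set.Icc ((0 : ℝ), (0 : ℝ)) (1, 1) := by
  rw [image_add_pt_T1]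
  refine convexHull_min ?_ (convex_Icc _ _)
  simp only [Set.mem_Ico] at ht1 ht2
  simp only [Set.insert_subset_iff, Set.singleton_subset_iff]
  refine ⟨pt_mem_Icc ?_ ?_, pt_mem_Icc ?_ ?_, pt_mem_Icc ?_ ?_⟩ <;>
    simp only [Set.mem_Icc, Prod.fst_add, Prod.snd_add] <;> omega

/-- any `d`-minimal triangle is `G`-equivalent to a translate of `T₁`
by a vector of `L_d`, and the translate may be chosen inside the unit square. -/
theorem minimal_triangle_G_equiv_translate_of_T1 (d : ℕ) (hd : 0 < d) (p q r : ℝ × ℝ)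
    (h : IsMinimalTriangle d p q r) :
    ∃ (g : GMap) (v : ℝ × ℝ), v ∈ Ld d ∧
      g.app '' convexHull ℝ ({p, q, r} : Set (ℝ × ℝ)) = (fun x => x + v) '' T1 d ∧
      (fun x => x + v) '' T1 d ⊆ Set.Icc ((0 : ℝ), (0 : ℝ)) (1, 1) := by
  obtain ⟨P, rfl⟩ : p ∈ Set.range (pt d) := Ld_eq_range ▸ h.1
  obtain ⟨Q, rfl⟩ : q ∈ Set.range (pt d) := Ld_eq_range ▸ h.2.1
  obtain ⟨R, rfl⟩ : r ∈ Set.range (pt d) := Ld_eq_range ▸ h.2.2.1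
  obtain ⟨g, t, ht1, ht2, hP, hQ, hR⟩ := exists_gMap_app_eq hd.ne' P (h.isUnit_det2 hd.ne')
  rw [add_sub_cancel] at hQ hR
  refine ⟨g, pt d t, Ld_eq_range ▸ Set.mem_range_self t, ?_, ?_⟩
  · rw [GMap.image_convexHull, Set.image_insert_eq, Set.image_insert_eq, Set.image_singleton,
      hP, hQ, hR, image_add_pt_T1]
  · exact image_add_pt_T1_subset_Icc ht1 ht2
end
end

section
/- If U ∈ GL₂(Z), u ∈ Z², v, w ∈ (1/d)Z × (1/d)Z, and U(T₁ + v) + u = T₁ + w where T₁ = Conv((0,0), (1/d,0), (0,1/d)), then U belongs to the six-element set D = { [[1,0],[0,1]], [[0,1],[1,0]], [[0,1],[-1,-1]], [[-1,-1],[1,0]], [[1,0],[-1,-1]], [[-1,-1],[0,1]] }. -/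
noncomputable section

/-- The linear action of an integer matrix on `ℝ²`. -/
def Uact (U : Matrix (Fin 2) (Fin 2) ℤ) (p : ℝ × ℝ) : ℝ × ℝ :=
  ((U 0 0 : ℝ) * p.1 + (U 0 1 : ℝ) * p.2, (U 1 0 : ℝ) * p.1 + (U 1 1 : ℝ) * p.2)

/-!
Multiplying coordinates by `d`, the hypothesis says that the affine map `x ↦ m + U x` of `ℤ²`,
with `m ∈ ℤ²` built from `u`, `v`, `w`, sends the three numerators `(0,0), (1,0), (0,1)` of the
vertices of `T₁` into the set of numerators of lattice points of `T₁`, which are these three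
points again. As `U` is invertible, the images are distinct, so the map permutes them; the linear
part of such a permutation has columns `P₁ - P₀` and `P₂ - P₀` for an ordering `P₀, P₁, P₂` of
the vertices, and the six orderings give the six matrices.
-/

def unitTriangleVerts : Finset (ℤ × ℤ) := {(0, 0), (1, 0), (0, 1)}

def dihedralSet : Finset (Matrix (Fin 2) (Fin 2) ℤ) :=
  {!![1, 0; 0, 1], !![0, 1; 1, 0], !![0, 1; -1, -1], !![-1, -1; 1, 0], !![1, 0; -1, -1],
    !![-1, -1; 0, 1]}

def UactInt (U : Matrix (Fin 2) (Fin 2) ℤ) (p : ℤ × ℤ) : ℤ × ℤ :=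
  (U 0 0 * p.1 + U 0 1 * p.2, U 1 0 * p.1 + U 1 1 * p.2)

theorem convexHull_triangle_subset {r : ℝ} (hr : 0 ≤ r) :
    convexHull ℝ ({(0, 0), (r, 0), (0, r)} : Set (ℝ × ℝ)) ⊆
      {p | 0 ≤ p.1 ∧ 0 ≤ p.2 ∧ p.1 + p.2 ≤ r} := by
  refine convexHull_min ?_ ?_
  · rintro p (rfl | rfl | rfl) <;> simp [hr]
  · convert ((convex_halfSpace_ge (LinearMap.fst ℝ ℝ ℝ).isLinear 0).inter
      (convex_halfSpace_ge (LinearMap.snd ℝ ℝ ℝ).isLinear 0)).inter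
      (convex_halfSpace_le (LinearMap.fst ℝ ℝ ℝ + LinearMap.snd ℝ ℝ ℝ).isLinear r) using 1
    ext p
    simp [and_assoc]

theorem mem_unitTriangleVerts_of_pt_mem_T1 {d : ℕ} (hd : 0 < d) {p : ℤ × ℤ}
    (h : pt d p ∈ T1 d) : p ∈ unitTriangleVerts := by
  have hd' : (0 : ℝ) < d := Nat.cast_pos.mpr hd
  obtain ⟨h1, h2, h3⟩ := convexHull_triangle_subset (by positivity) h
  simp only [pt, ← add_div] at h1 h2 h3
  rw [le_div_iff₀ hd', zero_mul] at h1 h2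
  rw [div_le_div_iff_of_pos_right hd'] at h3
  have h1 : 0 ≤ p.1 := mod_cast h1
  have h2 : 0 ≤ p.2 := mod_cast h2
  have h3 : p.1 + p.2 ≤ 1 := mod_cast h3
  simp only [unitTriangleVerts, Finset.mem_insert, Finset.mem_singleton, Prod.ext_iff]
  omega

theorem pt_mem_T1 (d : ℕ) {p : ℤ × ℤ} (hp : p ∈ unitTriangleVerts) : pt d p ∈ T1 d := by
  apply subset_convexHull
  simp only [unitTriangleVerts, Finset.mem_insert, Finset.mem_singleton] at hp
  rcases hp with rfl | rfl | rfl <;> simp [pt]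

theorem linearPart_mem_dihedralSet_of_distinct :
    ∀ p ∈ unitTriangleVerts, ∀ q ∈ unitTriangleVerts, ∀ r ∈ unitTriangleVerts,
      q ≠ p → r ≠ p → q ≠ r → !![q.1 - p.1, r.1 - p.1; q.2 - p.2, r.2 - p.2] ∈ dihedralSet := by
  decide

theorem mem_dihedralSet_of_mapsTo {U : Matrix (Fin 2) (Fin 2) ℤ} (hU : U.det ≠ 0) {m : ℤ × ℤ}
    (h : Set.MapsTo (m + UactInt U ·) unitTriangleVerts unitTriangleVerts) :
    U ∈ dihedralSet := by
  rw [Matrix.det_fin_two] at hU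
  have hvert : ∀ p ∈ unitTriangleVerts, m + UactInt U p ∈ unitTriangleVerts := fun _ hp => h hp
  -- two equal images force a zero column or two equal columns of `U`
  have key := linearPart_mem_dihedralSet_of_distinct _ (hvert (0, 0) (by decide))
    _ (hvert (1, 0) (by decide)) _ (hvert (0, 1) (by decide))
    (fun heq => hU (by simp_all [UactInt, Prod.ext_iff]))
    (fun heq => hU (by simp_all [UactInt, Prod.ext_iff]))
    (fun heq => hU (by simp_all [UactInt, Prod.ext_iff]))
  simpa [UactInt, ← Matrix.eta_fin_two U] using key

/-- if `U(T₁ + v) + u = T₁ + w` with `U ∈ GL₂(ℤ)`, `u ∈ ℤ²`,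
`v, w ∈ L_d`, then `U` is one of the six listed matrices. -/
theorem U_mem_dihedral_set (d : ℕ) (hd : 0 < d) (U : Matrix (Fin 2) (Fin 2) ℤ)
    (hU : U.det = 1 ∨ U.det = -1) (u : ℤ × ℤ) (v w : ℝ × ℝ)
    (hv : v ∈ Ld d) (hw : w ∈ Ld d)
    (h : (fun x => Uact U x + ((u.1 : ℝ), (u.2 : ℝ))) '' ((fun x => x + v) '' T1 d)
        = (fun x => x + w) '' T1 d) :
    U = !![1, 0; 0, 1] ∨ U = !![0, 1; 1, 0] ∨ U = !![0, 1; -1, -1] ∨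
    U = !![-1, -1; 1, 0] ∨ U = !![1, 0; -1, -1] ∨ U = !![-1, -1; 0, 1] := by
  obtain ⟨a, b, rfl⟩ := hv
  obtain ⟨c, e, rfl⟩ := hw
  have hd' : (d : ℝ) ≠ 0 := Nat.cast_ne_zero.mpr hd.ne'
  set m : ℤ × ℤ := (U 0 0 * a + U 0 1 * b + d * u.1 - c, U 1 0 * a + U 1 1 * b + d * u.2 - e)
  have hmaps : Set.MapsTo (m + UactInt U ·) unitTriangleVerts unitTriangleVerts := by
    intro p hp
    refine mem_unitTriangleVerts_of_pt_mem_T1 hd ?_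
    have himage := h ▸ Set.mem_image_of_mem _
      (Set.mem_image_of_mem (· + pt d (a, b)) (pt_mem_T1 d hp))
    rw [Set.image_add_right, Set.mem_preimage] at himage
    convert himage using 1
    simp only [m, pt, Uact, UactInt, Prod.mk_add_mk, Prod.neg_mk, Prod.mk.injEq]
    push_cast
    constructor <;> field_simp <;> ring
  have hdet : U.det ≠ 0 := by rcases hU with h | h <;> simp [h]
  simpa [dihedralSet] using mem_dihedralSet_of_mapsTo hdet hmaps
end
end

section
/- Let E be an oriented d-minimal segment from p = (w/d, x/d) to q = (y/d, z/d) with w,x,y,z ∈ Z, and let g = U ⋉ v ∈ G = GL₂(Z) ⋉ Z². Then the weight W(g(E)) of the image segment (oriented from g(p) to g(q)) equals det(U)·W(E) mod d, where W(E) = wz − xy mod d. In particular the weight is invariant up to sign under G-maps. -/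
noncomputable section

/-- the weight of the image of an oriented `d`-minimal segment under a
`G`-map `g = U ⋉ v` equals `det U` times the original weight (mod `d`); in particular
the weight is invariant up to sign. -/
theorem segment_weight_G_invariant (d : ℕ) (hd : 0 < d) (w x y z : ℤ)
    (hmin : IsMinimalSegment d ((w : ℝ) / d, (x : ℝ) / d) ((y : ℝ) / d, (z : ℝ) / d))
    (g : GMap) (w' x' y' z' : ℤ)
    (hp : g.app ((w : ℝ) / d, (x : ℝ) / d) = ((w' : ℝ) / d, (x' : ℝ) / d))
    (hq : g.app ((y : ℝ) / d, (z : ℝ) / d) = ((y' : ℝ) / d, (z' : ℝ) / d)) :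
    ((w' * z' - x' * y' : ℤ) : ZMod d)
        = ((g.a * g.e - g.b * g.c : ℤ) : ZMod d) * ((w * z - x * y : ℤ) : ZMod d) ∧
      (((w' * z' - x' * y' : ℤ) : ZMod d) = ((w * z - x * y : ℤ) : ZMod d) ∨
        ((w' * z' - x' * y' : ℤ) : ZMod d) = -((w * z - x * y : ℤ) : ZMod d)) := by

  have hd' : (d : ℝ) ≠ 0 := Nat.cast_ne_zero.mpr hd.ne'
  have h1 : (w' : ℝ) = g.a * w + g.b * x + d * g.v1 := by
    have h := congrArg Prod.fst hp
    simp only [GMap.app] at h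
    field_simp at h
    linarith
  have h2 : (x' : ℝ) = g.c * w + g.e * x + d * g.v2 := by
    have h := congrArg Prod.snd hp
    simp only [GMap.app] at h
    field_simp at h
    linarith
  have h3 : (y' : ℝ) = g.a * y + g.b * z + d * g.v1 := by
    have h := congrArg Prod.fst hq
    simp only [GMap.app] at h
    field_simp at h
    linarith
  have h4 : (z' : ℝ) = g.c * y + g.e * z + d * g.v2 := by
    have h := congrArg Prod.snd hq
    simp only [GMap.app] at h
    field_simp at h
    linarith
  have h1' : w' = g.a * w + g.b * x + (d : ℤ) * g.v1 := by exact_mod_cast h1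
  have h2' : x' = g.c * w + g.e * x + (d : ℤ) * g.v2 := by exact_mod_cast h2
  have h3' : y' = g.a * y + g.b * z + (d : ℤ) * g.v1 := by exact_mod_cast h3
  have h4' : z' = g.c * y + g.e * z + (d : ℤ) * g.v2 := by exact_mod_cast h4
  subst h1' h2' h3' h4'
  have hmain : ((((g.a * w + g.b * x + (d : ℤ) * g.v1) * (g.c * y + g.e * z + (d : ℤ) * g.v2) -
      (g.c * w + g.e * x + (d : ℤ) * g.v2) * (g.a * y + g.b * z + (d : ℤ) * g.v1) : ℤ)) : ZMod d)
      = ((g.a * g.e - g.b * g.c : ℤ) : ZMod d) * ((w * z - x * y : ℤ) : ZMod d) := by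
    push_cast [ZMod.natCast_self]
    ring
  refine ⟨hmain, ?_⟩
  rcases g.unimod with h | h
  · left
    rw [hmain, h]
    push_cast
    ring
  · right
    rw [hmain, h]
    push_cast
    ring
end
end

section
/- Let T be a d-minimal triangle with counterclockwise-oriented edge weights forming the multiset W(T), and let g ∈ G = GL₂(Z) ⋉ Z². Then W(g(T)) = W(T) as multisets of residues mod d. -/
noncomputable section

lemma GMap.app_pt {d : ℕ} (hd : 0 < d) (g : GMap) (P P' : ℤ × ℤ)
    (h : g.app (pt d P) = pt d P') :
    P'.1 = g.a * P.1 + g.b * P.2 + g.v1 * d ∧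
    P'.2 = g.c * P.1 + g.e * P.2 + g.v2 * d := by
  have hd' : (d : ℝ) ≠ 0 := Nat.cast_ne_zero.mpr hd.ne'
  simp only [GMap.app, pt, Prod.mk.injEq] at h
  obtain ⟨h1, h2⟩ := h
  constructor
  · have : ((g.a * P.1 + g.b * P.2 + g.v1 * d : ℤ) : ℝ) = (P'.1 : ℝ) := by
      push_cast
      field_simp at h1
      linarith
    exact_mod_cast this.symm
  · have : ((g.c * P.1 + g.e * P.2 + g.v2 * d : ℤ) : ℝ) = (P'.2 : ℝ) := by
      push_cast
      field_simp at h2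
      linarith
    exact_mod_cast this.symm

lemma segWeight_antisymm (d : ℕ) (P Q : ℤ × ℤ) :
    segWeight d P Q = - segWeight d Q P := by
  simp only [segWeight]
  push_cast
  ring

lemma segWeight_map {d : ℕ} (g : GMap) (P Q P' Q' : ℤ × ℤ)
    (hP1 : P'.1 = g.a * P.1 + g.b * P.2 + g.v1 * d)
    (hP2 : P'.2 = g.c * P.1 + g.e * P.2 + g.v2 * d)
    (hQ1 : Q'.1 = g.a * Q.1 + g.b * Q.2 + g.v1 * d)
    (hQ2 : Q'.2 = g.c * Q.1 + g.e * Q.2 + g.v2 * d) :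
    segWeight d P' Q' = ((g.a * g.e - g.b * g.c : ℤ) : ZMod d) * segWeight d P Q := by
  have key : P'.1 * Q'.2 - P'.2 * Q'.1 =
      (g.a * g.e - g.b * g.c) * (P.1 * Q.2 - P.2 * Q.1) +
      (d : ℤ) * (g.v2 * (g.a * P.1 + g.b * P.2) + g.v1 * (g.c * Q.1 + g.e * Q.2)
        - g.v1 * (g.c * P.1 + g.e * P.2) - g.v2 * (g.a * Q.1 + g.b * Q.2)) := by
    rw [hP1, hP2, hQ1, hQ2]; ring
  simp only [segWeight, key]
  push_cast
  simp [ZMod.natCast_self]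

lemma det_map {d : ℕ} (g : GMap) (P Q R P' Q' R' : ℤ × ℤ)
    (hP1 : P'.1 = g.a * P.1 + g.b * P.2 + g.v1 * d)
    (hP2 : P'.2 = g.c * P.1 + g.e * P.2 + g.v2 * d)
    (hQ1 : Q'.1 = g.a * Q.1 + g.b * Q.2 + g.v1 * d)
    (hQ2 : Q'.2 = g.c * Q.1 + g.e * Q.2 + g.v2 * d)
    (hR1 : R'.1 = g.a * R.1 + g.b * R.2 + g.v1 * d)
    (hR2 : R'.2 = g.c * R.1 + g.e * R.2 + g.v2 * d) :
    (Q'.1 - P'.1) * (R'.2 - P'.2) - (Q'.2 - P'.2) * (R'.1 - P'.1) =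
    (g.a * g.e - g.b * g.c) *
      ((Q.1 - P.1) * (R.2 - P.2) - (Q.2 - P.2) * (R.1 - P.1)) := by
  rw [hP1, hP2, hQ1, hQ2, hR1, hR2]; ring

/-- the multiset of counterclockwise edge weights of a `d`-minimal
triangle is invariant under `G`-maps: whichever ordering of the image vertices is
counterclockwise yields the same weight multiset. -/
theorem triangle_weight_multiset_G_invariant (d : ℕ) (hd : 0 < d)
    (p q r p' q' r' : ℤ × ℤ) (g : GMap)
    (hmin : IsMinimalTriangle d (pt d p) (pt d q) (pt d r))
    (hccw : ccwZ p q r)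
    (hp : g.app (pt d p) = pt d p')
    (hq : g.app (pt d q) = pt d q')
    (hr : g.app (pt d r) = pt d r') :
    (ccwZ p' q' r' → triWeight d p' q' r' = triWeight d p q r) ∧
    (ccwZ p' r' q' → triWeight d p' r' q' = triWeight d p q r) := by
  obtain ⟨hp1, hp2⟩ := GMap.app_pt hd g p p' hp
  obtain ⟨hq1, hq2⟩ := GMap.app_pt hd g q q' hq
  obtain ⟨hr1, hr2⟩ := GMap.app_pt hd g r r' hr
  have hdet := det_map g p q r p' q' r' hp1 hp2 hq1 hq2 hr1 hr2
  have hspq := segWeight_map g p q p' q' hp1 hp2 hq1 hq2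
  have hsqr := segWeight_map g q r q' r' hq1 hq2 hr1 hr2
  have hsrp := segWeight_map g r p r' p' hr1 hr2 hp1 hp2
  have hspr := segWeight_map g p r p' r' hp1 hp2 hr1 hr2
  have hsrq := segWeight_map g r q r' q' hr1 hr2 hq1 hq2
  have hsqp := segWeight_map g q p q' p' hq1 hq2 hp1 hp2
  have hflip : (r'.1 - p'.1) * (q'.2 - p'.2) - (r'.2 - p'.2) * (q'.1 - p'.1) =
      -((q'.1 - p'.1) * (r'.2 - p'.2) - (q'.2 - p'.2) * (r'.1 - p'.1)) := by ring
  have hccw' : 0 < (q.1 - p.1) * (r.2 - p.2) - (q.2 - p.2) * (r.1 - p.1) := hccw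
  rcases g.unimod with hD | hD
  · rw [hD] at hdet hspq hsqr hsrp
    constructor
    · intro _
      simp only [triWeight, hspq, hsqr, hsrp, Int.cast_one, one_mul]
    · intro h
      have h' : 0 < (r'.1 - p'.1) * (q'.2 - p'.2) - (r'.2 - p'.2) * (q'.1 - p'.1) := h
      exfalso
      rw [hflip, hdet, one_mul] at h'
      linarith
  · rw [hD] at hdet hspr hsrq hsqp
    constructor
    · intro h
      have h' : 0 < (q'.1 - p'.1) * (r'.2 - p'.2) - (q'.2 - p'.2) * (r'.1 - p'.1) := h
      exfalso
      rw [hdet] at h'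
      nlinarith
    · intro _
      have e1 : segWeight d p' r' = segWeight d r p := by
        rw [hspr, segWeight_antisymm d r p]; push_cast; ring
      have e2 : segWeight d r' q' = segWeight d q r := by
        rw [hsrq, segWeight_antisymm d q r]; push_cast; ring
      have e3 : segWeight d q' p' = segWeight d p q := by
        rw [hsqp, segWeight_antisymm d p q]; push_cast; ring
      simp only [triWeight, e1, e2, e3]
      refine Multiset.ext.mpr fun a => ?_
      simp only [Multiset.insert_eq_cons, Multiset.count_cons, Multiset.count_singleton]
      omega
end
end

section
/- The triangles T_{(1,2)} = Conv((1/5,0), (0,1/5), (1/5,1/5)) and T_{(1,4)} = Conv((2/5,0), (1/5,1/5), (2/5,1/5)) are not G-equivalent: there is no U ∈ GL₂(Z) and v ∈ Z² with U·T_{(1,2)} + v = T_{(1,4)}. -/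
noncomputable section

/-- `T_{(1,2)} = Conv((1/5,0), (0,1/5), (1/5,1/5))`. -/
def T12 : Set (ℝ × ℝ) :=
  convexHull ℝ ({((1 : ℝ) / 5, (0 : ℝ)), (0, (1 : ℝ) / 5), ((1 : ℝ) / 5, (1 : ℝ) / 5)} :
    Set (ℝ × ℝ))

/-- `T_{(1,4)} = Conv((2/5,0), (1/5,1/5), (2/5,1/5))`. -/
def T14 : Set (ℝ × ℝ) :=
  convexHull ℝ ({((2 : ℝ) / 5, (0 : ℝ)), ((1 : ℝ) / 5, (1 : ℝ) / 5), ((2 : ℝ) / 5, (1 : ℝ) / 5)} :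
    Set (ℝ × ℝ))

/-- `T_{(1,2)}` and `T_{(1,4)}` are not `G`-equivalent. -/
theorem T12_not_G_equiv_T14 : ¬ ∃ g : GMap, g.app '' T12 = T14 := by
  rintro ⟨g, hg⟩
  have hf1 : IsLinearMap ℝ (fun p : ℝ × ℝ => p.1) := ⟨fun x y => rfl, fun c x => rfl⟩
  have hf2 : IsLinearMap ℝ (fun p : ℝ × ℝ => p.2) := ⟨fun x y => rfl, fun c x => rfl⟩
  have hf3 : IsLinearMap ℝ (fun p : ℝ × ℝ => p.1 + p.2) :=
    ⟨fun x y => by show (x.1 + y.1) + (x.2 + y.2) = _; ring,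
     fun c x => by show c * x.1 + c * x.2 = c * (x.1 + x.2); ring⟩
  have hsub : T14 ⊆ {p : ℝ × ℝ | p.1 ≤ 2/5 ∧ p.2 ≤ 1/5 ∧ 2/5 ≤ p.1 + p.2} := by
    apply convexHull_min
    · rintro p hp
      simp only [Set.mem_insert_iff, Set.mem_singleton_iff] at hp
      rcases hp with h | h | h <;> subst h <;> norm_num
    · exact (convex_halfSpace_le hf1 (2/5)).inter
        ((convex_halfSpace_le hf2 (1/5)).inter (convex_halfSpace_ge hf3 (2/5)))
  have hmem : ∀ p ∈ T12, g.app p ∈ T14 := by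
    intro p hp; rw [← hg]; exact Set.mem_image_of_mem _ hp
  have hv1 : ((1:ℝ)/5, (0:ℝ)) ∈ T12 := subset_convexHull ℝ _ (by simp)
  have hv2 : ((0:ℝ), (1:ℝ)/5) ∈ T12 := subset_convexHull ℝ _ (by simp)
  have hv3 : ((1:ℝ)/5, (1:ℝ)/5) ∈ T12 := subset_convexHull ℝ _ (by simp)
  have h1 := hsub (hmem _ hv1)
  have h2 := hsub (hmem _ hv2)
  have h3 := hsub (hmem _ hv3)
  simp only [GMap.app, Set.mem_setOf_eq, mul_zero, mul_one, zero_add, add_zero] at h1 h2 h3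
  obtain ⟨h1a, h1b, h1c⟩ := h1
  obtain ⟨h2a, h2b, h2c⟩ := h2
  obtain ⟨h3a, h3b, h3c⟩ := h3
  have i1 : g.a + 5 * g.v1 ≤ 2 := by
    have : ((g.a + 5 * g.v1 : ℤ) : ℝ) ≤ 2 := by push_cast; linarith
    exact_mod_cast this
  have i2 : g.c + 5 * g.v2 ≤ 1 := by
    have : ((g.c + 5 * g.v2 : ℤ) : ℝ) ≤ 1 := by push_cast; linarith
    exact_mod_cast this
  have i3 : 2 ≤ g.a + g.c + 5 * g.v1 + 5 * g.v2 := by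
    have : (2:ℝ) ≤ ((g.a + g.c + 5 * g.v1 + 5 * g.v2 : ℤ) : ℝ) := by push_cast; linarith
    exact_mod_cast this
  have i4 : g.b + 5 * g.v1 ≤ 2 := by
    have : ((g.b + 5 * g.v1 : ℤ) : ℝ) ≤ 2 := by push_cast; linarith
    exact_mod_cast this
  have i5 : g.e + 5 * g.v2 ≤ 1 := by
    have : ((g.e + 5 * g.v2 : ℤ) : ℝ) ≤ 1 := by push_cast; linarith
    exact_mod_cast this
  have i6 : 2 ≤ g.b + g.e + 5 * g.v1 + 5 * g.v2 := by
    have : (2:ℝ) ≤ ((g.b + g.e + 5 * g.v1 + 5 * g.v2 : ℤ) : ℝ) := by push_cast; linarith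
    exact_mod_cast this
  have i7 : g.a + g.b + 5 * g.v1 ≤ 2 := by
    have : ((g.a + g.b + 5 * g.v1 : ℤ) : ℝ) ≤ 2 := by push_cast; linarith
    exact_mod_cast this
  have i8 : g.c + g.e + 5 * g.v2 ≤ 1 := by
    have : ((g.c + g.e + 5 * g.v2 : ℤ) : ℝ) ≤ 1 := by push_cast; linarith
    exact_mod_cast this
  have i9 : 2 ≤ g.a + g.b + g.c + g.e + 5 * g.v1 + 5 * g.v2 := by
    have : (2:ℝ) ≤ ((g.a + g.b + g.c + g.e + 5 * g.v1 + 5 * g.v2 : ℤ) : ℝ) := by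
      push_cast; linarith
    exact_mod_cast this
  omega
end
end

section
/- For every positive integer t, the number of integer lattice points in t·T_{(1,2)} equals the number of integer lattice points in t·T_{(1,4)}, where T_{(1,2)} = Conv((1/5,0), (0,1/5), (1/5,1/5)) and T_{(1,4)} = Conv((2/5,0), (1/5,1/5), (2/5,1/5)). Both counts are given by the quasi-polynomial: t²/50 + 3t/50 − 2/25 if t ≡ 1 (mod 5); t²/50 + t/50 − 3/25 if t ≡ 2; t²/50 − t/50 − 3/25 if t ≡ 3; t²/50 − 3t/50 − 2/25 if t ≡ 4; t²/50 + 3t/10 + 1 if t ≡ 0 (mod 5). -/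
noncomputable section

/-- The Ehrhart counting function: the number of integer lattice points in the
`t`-th dilate of `P ⊆ ℝ²`. -/
def ehr (P : Set (ℝ × ℝ)) (t : ℕ) : ℕ :=
  Set.ncard {z : ℤ × ℤ |
    ((z.1 : ℝ), (z.2 : ℝ)) ∈ (fun x : ℝ × ℝ => ((t : ℝ) * x.1, (t : ℝ) * x.2)) '' P}

/-! Both triangles are of the form `{x ≤ α, y ≤ β, γ ≤ x + y}`, which `t` dilates to the same
form with parameters `tα, tβ, tγ`. The lattice points of such a triangle are those of
`{x ≤ ⌊tα⌋, y ≤ ⌊tβ⌋, ⌈tγ⌉ ≤ x + y}`, a lattice triangle of size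
`n = ⌊tα⌋ + ⌊tβ⌋ - ⌈tγ⌉` with `(n + 1)(n + 2)/2` points. For `T_{(1,2)}` and `T_{(1,4)}` the
two sizes agree for every `t`, and the quasi-polynomial is `(n + 1)(n + 2)/2` written in `t`. -/

open Finset in
theorem ncard_setOf_add_le (n : ℕ) : {p : ℕ × ℕ | p.1 + p.2 ≤ n}.ncard = (n + 2).choose 2 := by
  have h : {p : ℕ × ℕ | p.1 + p.2 ≤ n} = ↑((range (n + 1)).biUnion antidiagonal) := by
    ext p; simp
  rw [h, Set.ncard_coe_finset, card_biUnion, ← Nat.sum_range_add_choose n 1]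
  · simp
  · intro i _ j _ hij
    exact disjoint_left.2 fun p hi hj =>
      hij ((mem_antidiagonal.1 hi).symm.trans (mem_antidiagonal.1 hj))

-- For an empty triangle (`a + b - c < 0`) the argument of `choose` is `0` or `1`.
theorem ncard_lattice_triangle (a b c : ℤ) :
    {z : ℤ × ℤ | z.1 ≤ a ∧ z.2 ≤ b ∧ c ≤ z.1 + z.2}.ncard = (a + b - c + 2).toNat.choose 2 := by
  rcases lt_or_ge (a + b - c) 0 with hneg | hnonneg
  · have hempty : {z : ℤ × ℤ | z.1 ≤ a ∧ z.2 ≤ b ∧ c ≤ z.1 + z.2} = ∅ := by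
      ext z; simp only [Set.mem_ofPred_eq, Set.mem_empty_iff_false, iff_false]; omega
    rw [hempty, Set.ncard_empty, Nat.choose_eq_zero_of_lt (by omega)]
  · obtain ⟨n, hn⟩ := Int.eq_ofNat_of_zero_le hnonneg
    have himage : {z : ℤ × ℤ | z.1 ≤ a ∧ z.2 ≤ b ∧ c ≤ z.1 + z.2} =
        (fun p : ℕ × ℕ => (a - p.1, b - p.2)) '' {p | p.1 + p.2 ≤ n} := by
      ext z
      refine ⟨fun ⟨h1, h2, h3⟩ => ⟨((a - z.1).toNat, (b - z.2).toNat), ?_, ?_⟩, ?_⟩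
      · simp only [Set.mem_ofPred_eq]; omega
      · ext <;> simp <;> omega
      · rintro ⟨p, hp, rfl⟩; simp only [Set.mem_ofPred_eq] at hp ⊢; omega
    have hinj : Function.Injective fun p : ℕ × ℕ => (a - p.1, b - p.2) := by
      intro p q h; simp only [Prod.mk.injEq] at h; ext <;> omega
    rw [himage, Set.ncard_image_of_injective _ hinj, ncard_setOf_add_le, hn]
    rfl

theorem Int.floor_intCast_div_natCast {K : Type*} [Field K] [LinearOrder K] [IsOrderedRing K]
    [FloorRing K] (m : ℤ) (d : ℕ) : ⌊(m : K) / d⌋ = m / d := by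
  rw [Int.floor_div_natCast, Int.floor_intCast]

theorem Int.ceil_intCast_div_natCast {K : Type*} [Field K] [LinearOrder K] [IsOrderedRing K]
    [FloorRing K] (m : ℤ) (d : ℕ) : ⌈(m : K) / d⌉ = -(-m / d) := by
  rw [← neg_neg ⌈_⌉, ← Int.floor_neg, ← neg_div, ← Int.cast_neg, Int.floor_intCast_div_natCast]

def cornerTriangle (α β γ : ℝ) : Set (ℝ × ℝ) := {p | p.1 ≤ α ∧ p.2 ≤ β ∧ γ ≤ p.1 + p.2}

theorem convex_cornerTriangle (α β γ : ℝ) : Convex ℝ (cornerTriangle α β γ) :=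
  (convex_halfSpace_le (LinearMap.fst ℝ ℝ ℝ).isLinear α).inter <|
    (convex_halfSpace_le (LinearMap.snd ℝ ℝ ℝ).isLinear β).inter <|
      convex_halfSpace_ge (LinearMap.fst ℝ ℝ ℝ + LinearMap.snd ℝ ℝ ℝ).isLinear γ

theorem convexHull_eq_cornerTriangle {α β γ : ℝ} (h : γ < α + β) :
    convexHull ℝ {(α, γ - α), (γ - β, β), (α, β)} = cornerTriangle α β γ := by
  refine subset_antisymm (convexHull_min ?_ (convex_cornerTriangle α β γ)) ?_
  · simp only [Set.insert_subset_iff, Set.singleton_subset_iff, cornerTriangle,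
      Set.mem_ofPred_eq]
    refine ⟨⟨?_, ?_, ?_⟩, ⟨?_, ?_, ?_⟩, ⟨?_, ?_, ?_⟩⟩ <;> linarith
  · rintro ⟨x, y⟩ ⟨hx, hy, hxy⟩
    set s := α + β - γ
    have hs : 0 < s := by linarith
    have hmem := (convex_convexHull ℝ {(α, γ - α), (γ - β, β), (α, β)}).sum_mem
      (t := Finset.univ) (w := ![(β - y) / s, (α - x) / s, (x + y - γ) / s])
      (z := ![(α, γ - α), (γ - β, β), (α, β)]) ?_ ?_ ?_
    · convert hmem using 1
      simp only [Fin.sum_univ_three, Matrix.cons_val_zero, Matrix.cons_val_one,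
        Matrix.cons_val_two, Matrix.head_cons, Matrix.tail_cons, Prod.smul_mk, smul_eq_mul,
        Prod.mk_add_mk]
      ext <;> field_simp <;> ring
    · intro i _; fin_cases i <;> simp <;> apply div_nonneg <;> linarith
    · simp only [Fin.sum_univ_three, Matrix.cons_val_zero, Matrix.cons_val_one,
        Matrix.cons_val_two, Matrix.head_cons, Matrix.tail_cons]
      field_simp; ring
    · intro i _; fin_cases i <;> exact subset_convexHull ℝ _ (by simp)

theorem image_dilate_cornerTriangle {t : ℝ} (ht : 0 < t) (α β γ : ℝ) :
    (fun x : ℝ × ℝ => (t * x.1, t * x.2)) '' cornerTriangle α β γ =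
      cornerTriangle (t * α) (t * β) (t * γ) := by
  ext ⟨x, y⟩
  change (x, y) ∈ (t • ·) '' cornerTriangle α β γ ↔ _
  rw [Set.image_smul, Set.mem_smul_set_iff_inv_smul_mem₀ ht.ne']
  simp only [cornerTriangle, Set.mem_ofPred_eq, Prod.smul_mk, smul_eq_mul, ← mul_add,
    inv_mul_le_iff₀ ht, le_inv_mul_iff₀ ht]

theorem intCast_mem_cornerTriangle_iff (α β γ : ℝ) (z : ℤ × ℤ) :
    ((z.1 : ℝ), (z.2 : ℝ)) ∈ cornerTriangle α β γ ↔
      z.1 ≤ ⌊α⌋ ∧ z.2 ≤ ⌊β⌋ ∧ ⌈γ⌉ ≤ z.1 + z.2 := by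
  simp only [cornerTriangle, Set.mem_ofPred_eq, Int.le_floor, Int.ceil_le, Int.cast_add]

theorem ehr_cornerTriangle {t : ℕ} (ht : 0 < t) (α β γ : ℝ) :
    ehr (cornerTriangle α β γ) t = (⌊t * α⌋ + ⌊t * β⌋ - ⌈t * γ⌉ + 2).toNat.choose 2 := by
  rw [ehr, image_dilate_cornerTriangle (Nat.cast_pos.2 ht), ← ncard_lattice_triangle]
  simp only [intCast_mem_cornerTriangle_iff]

theorem T12_eq_cornerTriangle : T12 = cornerTriangle (1 / 5) (1 / 5) (1 / 5) := by
  rw [T12, ← convexHull_eq_cornerTriangle (by norm_num)]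
  norm_num

theorem T14_eq_cornerTriangle : T14 = cornerTriangle (2 / 5) (1 / 5) (2 / 5) := by
  rw [T14, ← convexHull_eq_cornerTriangle (by norm_num)]
  norm_num

-- With `t = 5q + r`, both sizes `⌊t/5⌋ + ⌊t/5⌋ - ⌈t/5⌉` and `⌊2t/5⌋ + ⌊t/5⌋ - ⌈2t/5⌉`
-- are `q` for `r = 0` and `q - 1` otherwise.
theorem ehr_T12 {t : ℕ} (ht : 0 < t) :
    ehr T12 t = (t / 5 + if t % 5 = 0 then 2 else 1).choose 2 := by
  have h : (t : ℝ) * (1 / 5) = ((t : ℤ) : ℝ) / (5 : ℕ) := by push_cast; ring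
  rw [T12_eq_cornerTriangle, ehr_cornerTriangle ht, h, Int.floor_intCast_div_natCast,
    Int.ceil_intCast_div_natCast]
  congr 1
  have : t % 5 < 5 := Nat.mod_lt t (by norm_num)
  interval_cases h : t % 5 <;> push_cast <;> omega

theorem ehr_T14 {t : ℕ} (ht : 0 < t) :
    ehr T14 t = (t / 5 + if t % 5 = 0 then 2 else 1).choose 2 := by
  have h1 : (t : ℝ) * (1 / 5) = ((t : ℤ) : ℝ) / (5 : ℕ) := by push_cast; ring
  have h2 : (t : ℝ) * (2 / 5) = ((2 * t : ℤ) : ℝ) / (5 : ℕ) := by push_cast; ring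
  rw [T14_eq_cornerTriangle, ehr_cornerTriangle ht, h1, h2, Int.floor_intCast_div_natCast,
    Int.floor_intCast_div_natCast, Int.ceil_intCast_div_natCast]
  congr 1
  have : t % 5 < 5 := Nat.mod_lt t (by norm_num)
  interval_cases h : t % 5 <;> push_cast <;> omega

theorem cast_choose_two_eq_quasipolynomial (t : ℕ) :
    (((t / 5 + if t % 5 = 0 then 2 else 1).choose 2 : ℕ) : ℚ) =
      (if t % 5 = 1 then (t : ℚ) ^ 2 / 50 + 3 * t / 50 - 2 / 25
       else if t % 5 = 2 then (t : ℚ) ^ 2 / 50 + t / 50 - 3 / 25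
       else if t % 5 = 3 then (t : ℚ) ^ 2 / 50 - t / 50 - 3 / 25
       else if t % 5 = 4 then (t : ℚ) ^ 2 / 50 - 3 * t / 50 - 2 / 25
       else (t : ℚ) ^ 2 / 50 + 3 * t / 10 + 1) := by
  obtain ⟨q, r, hr, rfl⟩ : ∃ q r, r < 5 ∧ t = 5 * q + r := ⟨t / 5, t % 5, by omega, by omega⟩
  have hq : (5 * q + r) / 5 = q := by omega
  have hr' : (5 * q + r) % 5 = r := by omega
  rw [hq, hr', Nat.cast_choose_two]
  interval_cases r <;> push_cast <;> ring

/-- `T_{(1,2)}` and `T_{(1,4)}` are Ehrhart equivalent, with the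
common Ehrhart quasi-polynomial given explicitly. -/
theorem ehrhart_T12_eq_T14 (t : ℕ) (ht : 0 < t) :
    ehr T12 t = ehr T14 t ∧
    (ehr T12 t : ℚ) =
      (if t % 5 = 1 then (t : ℚ) ^ 2 / 50 + 3 * t / 50 - 2 / 25
       else if t % 5 = 2 then (t : ℚ) ^ 2 / 50 + t / 50 - 3 / 25
       else if t % 5 = 3 then (t : ℚ) ^ 2 / 50 - t / 50 - 3 / 25
       else if t % 5 = 4 then (t : ℚ) ^ 2 / 50 - 3 * t / 50 - 2 / 25
       else (t : ℚ) ^ 2 / 50 + 3 * t / 10 + 1) := by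
  rw [ehr_T12 ht, ehr_T14 ht]
  exact ⟨rfl, cast_choose_two_eq_quasipolynomial t⟩
end
end

section
/- Let e₁ be the half-open triangle T_{(1,2)} = Conv((1/5,0),(0,1/5),(1/5,1/5)) with the closed edge from (1/5,0) to (0,1/5) removed, and similarly let e₃ be removed from T_{(1,4)} = Conv((2/5,0),(1/5,1/5),(2/5,1/5)) (the closed edge from (2/5,0) to (1/5,1/5)). Then there exists a bijection F from T_{(1,2)} \ e₁ to T_{(1,4)} \ e₃ and a countable partition of T_{(1,2)} \ e₁ into pieces P₁, P₂, ... such that F restricted to P_i is the map x ↦ U_i x where U_i = [[1, i],[0, 1]] ∈ GL₂(Z). -/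
noncomputable section

/-- The closed edge `e₁` of `T_{(1,2)}` from `(1/5,0)` to `(0,1/5)`. -/
def e1 : Set (ℝ × ℝ) := segment ℝ (((1 : ℝ) / 5, (0 : ℝ))) ((0, (1 : ℝ) / 5))

/-- The closed edge `e₃` of `T_{(1,4)}` from `(2/5,0)` to `(1/5,1/5)`. -/
def e3 : Set (ℝ × ℝ) := segment ℝ (((2 : ℝ) / 5, (0 : ℝ))) (((1 : ℝ) / 5, (1 : ℝ) / 5))

/-!
Cut both half-open triangles into horizontal slices. At height `0 < y ≤ 1/5` the slice of
`T_{(1,2)} \ e₁` is `(1/5 - y, 1/5]` and that of `T_{(1,4)} \ e₃` is `(2/5 - y, 2/5]`: two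
fundamental domains of the translations by `yℤ`. Hence reducing `x` modulo `y` into
`(2/5 - y, 2/5]`, i.e. `x ↦ x + n y` with `n = ⌊(2/5 - x) / y⌋ ≥ 0`, is a bijection of the
slices, and on `(x, y)` it is the shear `U_n`. The pieces are the level sets of `n`.
-/

open Set

theorem convex_rightTriangle (a h : ℝ) :
    Convex ℝ {p : ℝ × ℝ | p.1 ≤ a ∧ p.2 ≤ h ∧ a ≤ p.1 + p.2} :=
  (convex_halfSpace_le (LinearMap.fst ℝ ℝ ℝ).isLinear a).inter <|
    (convex_halfSpace_le (LinearMap.snd ℝ ℝ ℝ).isLinear h).inter <|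
      convex_halfSpace_ge (LinearMap.fst ℝ ℝ ℝ + LinearMap.snd ℝ ℝ ℝ).isLinear a

section RightTriangle

variable {a h : ℝ}

theorem convexHull_rightTriangle (hh : 0 < h) :
    convexHull ℝ {(a, 0), (a - h, h), (a, h)} =
      {p : ℝ × ℝ | p.1 ≤ a ∧ p.2 ≤ h ∧ a ≤ p.1 + p.2} := by
  refine (convexHull_min ?_ (convex_rightTriangle a h)).antisymm ?_
  · simp only [insert_subset_iff, singleton_subset_iff, mem_ofPred_eq]
    exact ⟨⟨le_rfl, hh.le, by simp⟩, ⟨by linarith, le_rfl, by simp⟩, le_rfl, le_rfl, by linarith⟩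
  · rintro ⟨x, y⟩ ⟨hx, hy, hxy⟩
    have hcomb := (convex_convexHull ℝ {((a, 0) : ℝ × ℝ), (a - h, h), (a, h)}).sum_mem
      (t := Finset.univ) (w := ![(h - y) / h, (a - x) / h, (x + y - a) / h])
      (z := ![(a, 0), (a - h, h), (a, h)]) ?_ ?_ ?_
    · convert hcomb using 1
      simp only [Fin.sum_univ_three, Matrix.cons_val]
      ext <;> simp <;> field_simp <;> ring
    · intro i _
      fin_cases i <;> simp <;> apply div_nonneg <;> linarith
    · simp only [Fin.sum_univ_three, Matrix.cons_val]
      field_simp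
      ring
    · intro i _
      fin_cases i <;> apply subset_convexHull <;> simp

theorem mem_segment_rightTriangle {p : ℝ × ℝ} :
    p ∈ segment ℝ ((a, 0) : ℝ × ℝ) (a - h, h) ↔ ∃ t ∈ Icc (0 : ℝ) 1, (a - t * h, t * h) = p := by
  rw [segment_eq_image]
  simp only [mem_image, Prod.smul_mk, Prod.mk_add_mk, smul_eq_mul]
  refine exists_congr fun t => and_congr_right fun _ => Eq.congr_left ?_
  ext <;> ring

theorem convexHull_rightTriangle_sdiff_segment (hh : 0 < h) :
    convexHull ℝ {(a, 0), (a - h, h), (a, h)} \ segment ℝ (a, 0) (a - h, h) =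
      {p : ℝ × ℝ | p.2 ∈ Ioc 0 h ∧ p.1 ∈ Ioc (a - p.2) a} := by
  ext ⟨x, y⟩
  simp only [mem_sdiff, convexHull_rightTriangle hh, mem_segment_rightTriangle, mem_ofPred_eq,
    mem_Ioc, mem_Icc, Prod.mk.injEq, not_exists, not_and]
  constructor
  · rintro ⟨⟨hx, hy, hxy⟩, hseg⟩
    have hlt : a < x + y := hxy.lt_of_ne fun heq =>
      hseg (y / h) ⟨div_nonneg (by linarith) hh.le, (div_le_one hh).2 hy⟩
        (by field_simp; linarith) (by field_simp)
    exact ⟨⟨by linarith, hy⟩, by linarith, hx⟩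
  · rintro ⟨⟨-, hy⟩, hxy, hx⟩
    exact ⟨⟨hx, hy, by linarith⟩, fun t _ hxt hyt => by linarith⟩

end RightTriangle

theorem T12_sdiff_e1 : T12 \ e1 = {p | p.2 ∈ Ioc 0 (1 / 5) ∧ p.1 ∈ Ioc (1 / 5 - p.2) (1 / 5)} := by
  have h := convexHull_rightTriangle_sdiff_segment (a := 1 / 5) (h := 1 / 5) (by norm_num)
  rwa [sub_self] at h

theorem T14_sdiff_e3 : T14 \ e3 = {p | p.2 ∈ Ioc 0 (1 / 5) ∧ p.1 ∈ Ioc (2 / 5 - p.2) (2 / 5)} := by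
  have h := convexHull_rightTriangle_sdiff_segment (a := 2 / 5) (h := 1 / 5) (by norm_num)
  rwa [show (2 : ℝ) / 5 - 1 / 5 = 1 / 5 by norm_num] at h

theorem bijOn_toIocMod {α : Type*} [AddCommGroup α] [LinearOrder α] [IsOrderedAddMonoid α]
    [Archimedean α] {p : α} (hp : 0 < p) (a b : α) :
    BijOn (toIocMod hp b) (Ioc a (a + p)) (Ioc b (b + p)) := by
  refine ⟨fun x _ => toIocMod_mem_Ioc hp b x, fun x hx y hy hxy => ?_, fun y hy => ?_⟩
  · rw [← (toIocMod_eq_self hp).2 hx, ← (toIocMod_eq_self hp).2 hy, ← toIocMod_toIocMod hp a b x,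
      hxy, toIocMod_toIocMod]
  · exact ⟨toIocMod hp a y, toIocMod_mem_Ioc hp a y,
      by rw [toIocMod_toIocMod, (toIocMod_eq_self hp).2 hy]⟩

theorem Set.BijOn.fiberwise {α β : Type*} {f : α × β → α} {Y : Set β} {s t : β → Set α}
    (h : ∀ y ∈ Y, BijOn (fun x => f (x, y)) (s y) (t y)) :
    BijOn (fun p => (f p, p.2)) {p | p.2 ∈ Y ∧ p.1 ∈ s p.2} {p | p.2 ∈ Y ∧ p.1 ∈ t p.2} := by
  refine ⟨fun p ⟨hy, hx⟩ => ⟨hy, (h _ hy).mapsTo hx⟩, ?_, ?_⟩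
  · rintro ⟨x, y⟩ ⟨hy, hx⟩ ⟨x', y'⟩ ⟨-, hx'⟩ hxy
    simp only [Prod.mk.injEq] at hxy
    obtain ⟨hf, rfl⟩ := hxy
    exact congrArg (·, y) ((h y hy).injOn hx hx' hf)
  · rintro ⟨x, y⟩ ⟨hy, hx⟩
    obtain ⟨x', hx', rfl⟩ := (h y hy).surjOn hx
    exact ⟨(x', y), ⟨hy, hx'⟩, rfl⟩

def shearIndex (c : ℝ) (p : ℝ × ℝ) : ℤ := ⌊(c - p.1) / p.2⌋

def shearInto (c : ℝ) (p : ℝ × ℝ) : ℝ × ℝ := (p.1 + shearIndex c p * p.2, p.2)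

theorem add_floor_div_mul_eq_toIocMod {c y : ℝ} (hy : 0 < y) (x : ℝ) :
    x + ⌊(c - x) / y⌋ * y = toIocMod hy (c - y) x := by
  rw [toIocMod, toIocDiv_eq_neg_floor, sub_add_cancel, neg_smul, sub_neg_eq_add, zsmul_eq_mul]

theorem bijOn_shearInto (a c : ℝ) {Y : Set ℝ} (hY : Y ⊆ Ioi 0) :
    BijOn (shearInto c) {p | p.2 ∈ Y ∧ p.1 ∈ Ioc (a - p.2) a}
      {p | p.2 ∈ Y ∧ p.1 ∈ Ioc (c - p.2) c} := by
  unfold shearInto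
  refine BijOn.fiberwise (s := fun y => Ioc (a - y) a) (t := fun y => Ioc (c - y) c)
    fun y hy => ?_
  have hy0 : 0 < y := hY hy
  have hbij := bijOn_toIocMod hy0 (a - y) (c - y)
  rw [sub_add_cancel, sub_add_cancel] at hbij
  exact hbij.congr fun x _ => (add_floor_div_mul_eq_toIocMod hy0 x).symm

section NatFibers

variable {α : Type*} {S : Set α} {g : α → ℤ}

theorem iUnion_setOf_eq_natCast (hg : ∀ p ∈ S, 0 ≤ g p) : ⋃ i : ℕ, {p ∈ S | g p = i} = S := by
  ext p
  simp only [mem_iUnion, mem_ofPred_eq]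
  exact ⟨fun ⟨_, hp, _⟩ => hp, fun hp => ⟨(g p).toNat, hp, (Int.toNat_of_nonneg (hg p hp)).symm⟩⟩

theorem pairwise_disjoint_setOf_eq_natCast :
    Pairwise (Function.onFun Disjoint fun i : ℕ => {p ∈ S | g p = i}) :=
  fun _ _ hij => disjoint_left.2 fun _ hi hj => hij (Nat.cast_injective (hi.2.symm.trans hj.2))

end NatFibers

/-- there is a bijection `F` from `T_{(1,2)} \ e₁` onto `T_{(1,4)} \ e₃`
together with a countable partition of `T_{(1,2)} \ e₁` into pieces `P i`, on each of
which `F` acts as the unimodular shear `U_i = [[1, i], [0, 1]]`. -/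
theorem infinite_equidecomposability :
    ∃ (F : ℝ × ℝ → ℝ × ℝ) (P : ℕ → Set (ℝ × ℝ)),
      Set.BijOn F (T12 \ e1) (T14 \ e3) ∧
      (⋃ i, P i) = T12 \ e1 ∧
      Pairwise (Function.onFun Disjoint P) ∧
      ∀ i : ℕ, Set.EqOn F (fun x : ℝ × ℝ => (x.1 + (i : ℝ) * x.2, x.2)) (P i) := by
  have hindex_nonneg : ∀ p ∈ T12 \ e1, 0 ≤ shearIndex (2 / 5) p := by
    rw [T12_sdiff_e1]
    rintro p ⟨⟨hy, -⟩, -, hx⟩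
    exact Int.floor_nonneg.2 (div_nonneg (by linarith) hy.le)
  refine ⟨shearInto (2 / 5), fun i => {p ∈ T12 \ e1 | shearIndex (2 / 5) p = i}, ?_,
    iUnion_setOf_eq_natCast hindex_nonneg, pairwise_disjoint_setOf_eq_natCast, ?_⟩
  · rw [T12_sdiff_e1, T14_sdiff_e3]
    exact bijOn_shearInto _ _ fun y hy => hy.1
  · rintro i p ⟨-, hi⟩
    simp [shearInto, hi]
end
end
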